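/- arXiv:1702.07412 — 3 statements merged into one kernel-verified Lean document; each statement's English description precedes it below -/
import Mathlib

section
/- Let X be a Banach space, [β₀, β₁] ⊂ ℝ, and let x̄(β) = ((β₁ − β)/(β₁ − β₀)) x̄₀ + ((β − β₀)/(β₁ − β₀)) x̄₁ be the linear interpolation between two points x̄₀, x̄₁ ∈ X. Let T : [β₀, β₁] × X → X be Fréchet differentiable in its second argument. Suppose Y ≥ 0 and Z ≥ 0 are constants such that sup_{β ∈ [β₀,β₁]} ‖T(β, x̄(β)) − x̄(β)‖ ≤ Y and ‖D_x T(β, x̄(β) + b) c‖ ≤ Z for all β ∈ [β₀, β₁] and all b, c with ‖b‖ ≤ r, ‖c‖ ≤ r. If Y + Z < r, then the map T̃(β, x) = T(β, x + x̄(β)) − x̄(β) maps B̄_r(0) into B̄_r(0) for every β ∈ [β₀, β₁] and satisfies ‖T̃(β, x) − T̃(β, y)‖ ≤ (Z/r)‖x − y‖ for all x, y ∈ B̄_r(0), with Z/r < 1; that is, T̃ is a uniform contraction on B̄_r(0). -/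
/-! Testing the derivative bound on vectors of norm exactly `r` gives `‖D_x T‖ ≤ Z / r` on the
ball `B̄_r(x̄(β))`, so by the mean value inequality on this convex ball `T̃(β, ·)` is
`Z / r`-Lipschitz on `B̄_r(0)`. Then `‖T̃(β, x)‖ ≤ ‖T̃(β, x) − T̃(β, 0)‖ + ‖T̃(β, 0)‖ ≤ Z + Y < r`. -/

open Metric

section

variable {E F : Type*} [NormedAddCommGroup E] [NormedSpace ℝ E]
  [NormedAddCommGroup F] [NormedSpace ℝ F]

theorem ContinuousLinearMap.opNorm_le_div_of_norm_apply_le (L : E →L[ℝ] F) {r Z : ℝ}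
    (hr : 0 < r) (hZ : 0 ≤ Z) (h : ∀ c, ‖c‖ ≤ r → ‖L c‖ ≤ Z) : ‖L‖ ≤ Z / r := by
  refine L.opNorm_le_bound (div_nonneg hZ hr.le) fun c => ?_
  rcases eq_or_ne c 0 with rfl | hc
  · simp
  have hcn : 0 < ‖c‖ := norm_pos_iff.mpr hc
  have hscaled : ‖(r / ‖c‖) • c‖ = r := by
    rw [norm_smul, Real.norm_of_nonneg (by positivity), div_mul_cancel₀ _ hcn.ne']
  have hbound : r / ‖c‖ * ‖L c‖ ≤ Z := by
    simpa [norm_smul, Real.norm_of_nonneg (div_pos hr hcn).le] using h _ hscaled.le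
  rw [div_mul_eq_mul_div, le_div_iff₀ hr]
  rw [div_mul_eq_mul_div, div_le_iff₀ hcn] at hbound
  linarith

theorem norm_image_add_sub_image_add_le {f : E → F} {f' : E → E →L[ℝ] F} {a : E} {r C : ℝ}
    (hf : ∀ u ∈ closedBall a r, HasFDerivAt f (f' u) u)
    (bound : ∀ u ∈ closedBall a r, ‖f' u‖ ≤ C) {x y : E}
    (hx : x ∈ closedBall (0 : E) r) (hy : y ∈ closedBall (0 : E) r) :
    ‖f (x + a) - f (y + a)‖ ≤ C * ‖x - y‖ := by
  have shift : ∀ z ∈ closedBall (0 : E) r, z + a ∈ closedBall a r := fun z hz => by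
    simpa [dist_eq_norm] using hz
  simpa using (convex_closedBall a r).norm_image_sub_le_of_norm_hasFDerivWithin_le
    (fun u hu => (hf u hu).hasFDerivWithinAt) bound (shift y hy) (shift x hx)

end

theorem mapsTo_closedBall_zero_of_norm_sub_le {E F : Type*} [SeminormedAddCommGroup E]
    [SeminormedAddCommGroup F] {g : E → F} {r q Y : ℝ} (hq : 0 ≤ q)
    (hlip : ∀ x ∈ closedBall (0 : E) r, ‖g x - g 0‖ ≤ q * ‖x‖) (hY : ‖g 0‖ ≤ Y)
    (hYq : Y + q * r ≤ r) : Set.MapsTo g (closedBall 0 r) (closedBall 0 r) := by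
  intro x hx
  rw [mem_closedBall_zero_iff] at hx ⊢
  calc ‖g x‖ ≤ ‖g x - g 0‖ + ‖g 0‖ := norm_le_norm_sub_add _ _
    _ ≤ q * ‖x‖ + Y := add_le_add (hlip x (mem_closedBall_zero_iff.mpr hx)) hY
    _ ≤ q * r + Y := by gcongr
    _ ≤ r := by linarith

theorem radii_bounds_give_uniform_contraction_general
    {X : Type*} [NormedAddCommGroup X] [NormedSpace ℝ X]
    (β₀ β₁ : ℝ)
    (xbar : ℝ → X)
    (T : ℝ → X → X) (DT : ℝ → X → (X →L[ℝ] X))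
    (hdiff : ∀ β ∈ Set.Icc β₀ β₁, ∀ x : X, HasFDerivAt (T β) (DT β x) x)
    (r Y Z : ℝ) (hr : 0 < r) (hY : 0 ≤ Y) (hZ : 0 ≤ Z)
    (hYbound : ∀ β ∈ Set.Icc β₀ β₁, ‖T β (xbar β) - xbar β‖ ≤ Y)
    (hZbound : ∀ β ∈ Set.Icc β₀ β₁, ∀ b c : X, ‖b‖ ≤ r → ‖c‖ ≤ r →
      ‖DT β (xbar β + b) c‖ ≤ Z)
    (hYZ : Y + Z < r) :
    (∀ β ∈ Set.Icc β₀ β₁, ∀ x ∈ Metric.closedBall (0 : X) r,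
      T β (x + xbar β) - xbar β ∈ Metric.closedBall (0 : X) r) ∧
    (∀ β ∈ Set.Icc β₀ β₁, ∀ x ∈ Metric.closedBall (0 : X) r,
      ∀ y ∈ Metric.closedBall (0 : X) r,
      ‖(T β (x + xbar β) - xbar β) - (T β (y + xbar β) - xbar β)‖ ≤ (Z / r) * ‖x - y‖) ∧
    Z / r < 1 := by
  have hop : ∀ β ∈ Set.Icc β₀ β₁, ∀ u ∈ closedBall (xbar β) r, ‖DT β u‖ ≤ Z / r :=
    fun β hβ u hu => (DT β u).opNorm_le_div_of_norm_apply_le hr hZ fun c hc => by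
      simpa using hZbound β hβ (u - xbar β) c (mem_closedBall_iff_norm.mp hu) hc
  have hlip : ∀ β ∈ Set.Icc β₀ β₁, ∀ x ∈ closedBall (0 : X) r, ∀ y ∈ closedBall (0 : X) r,
      ‖(T β (x + xbar β) - xbar β) - (T β (y + xbar β) - xbar β)‖ ≤ (Z / r) * ‖x - y‖ :=
    fun β hβ x hx y hy => by
      rw [sub_sub_sub_cancel_right]
      exact norm_image_add_sub_image_add_le (fun u _ => hdiff β hβ u) (hop β hβ) hx hy
  refine ⟨fun β hβ => ?_, hlip, (div_lt_one hr).mpr (by linarith)⟩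
  refine mapsTo_closedBall_zero_of_norm_sub_le (div_nonneg hZ hr.le) (fun x hx => ?_)
    (by simpa using hYbound β hβ) (by rw [div_mul_cancel₀ _ hr.ne']; linarith)
  simpa using hlip β hβ x hx 0 (mem_closedBall_self hr.le)

/-- If the residue bound `Y` and the derivative bound `Z` satisfy `Y + Z < r`, then
the shifted map `T̃(β, x) = T(β, x + x̄(β)) − x̄(β)`, with `x̄(β)` the linear
interpolation between `xb0` and `xb1`, maps the closed ball `B̄_r(0)` into itself and
is a uniform contraction with contraction constant `Z/r < 1`. -/
theorem radii_bounds_give_uniform_contraction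
    {X : Type*} [NormedAddCommGroup X] [NormedSpace ℝ X] [CompleteSpace X]
    (β₀ β₁ : ℝ) (hβ : β₀ < β₁) (xb0 xb1 : X)
    (xbar : ℝ → X)
    (hxbar : ∀ β, xbar β = ((β₁ - β) / (β₁ - β₀)) • xb0 + ((β - β₀) / (β₁ - β₀)) • xb1)
    (T : ℝ → X → X) (DT : ℝ → X → (X →L[ℝ] X))
    (hdiff : ∀ β ∈ Set.Icc β₀ β₁, ∀ x : X, HasFDerivAt (T β) (DT β x) x)
    (r Y Z : ℝ) (hr : 0 < r) (hY : 0 ≤ Y) (hZ : 0 ≤ Z)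
    (hYbound : ∀ β ∈ Set.Icc β₀ β₁, ‖T β (xbar β) - xbar β‖ ≤ Y)
    (hZbound : ∀ β ∈ Set.Icc β₀ β₁, ∀ b c : X, ‖b‖ ≤ r → ‖c‖ ≤ r →
      ‖DT β (xbar β + b) c‖ ≤ Z)
    (hYZ : Y + Z < r) :
    (∀ β ∈ Set.Icc β₀ β₁, ∀ x ∈ Metric.closedBall (0 : X) r,
      T β (x + xbar β) - xbar β ∈ Metric.closedBall (0 : X) r) ∧
    (∀ β ∈ Set.Icc β₀ β₁, ∀ x ∈ Metric.closedBall (0 : X) r,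
      ∀ y ∈ Metric.closedBall (0 : X) r,
      ‖(T β (x + xbar β) - xbar β) - (T β (y + xbar β) - xbar β)‖ ≤ (Z / r) * ‖x - y‖) ∧
    Z / r < 1 :=
  radii_bounds_give_uniform_contraction_general β₀ β₁ xbar T DT hdiff r Y Z hr hY hZ hYbound hZbound
    hYZ
end

section
/- Let ν ≥ 1, let a = (a_k)_{k≥0} be a sequence of complex numbers with ‖a‖_{1,ν} = |a₀| + 2 Σ_{k≥1} |a_k| ν^k < ∞, and let v = (v_k)_{k≥0} satisfy ‖v‖_{1,ν} ≤ 1. Then for every k ≥ 0, |(a ∗ v)_k| ≤ Q_k(a), where Q_k(a) := max{ |a_k|, sup_{k' ≥ 1} (|a_{|k−k'|}| + |a_{k+k'}|)/(2 ν^{k'}) } and (a ∗ v)_k = Σ_{k₁ + k₂ = k, k₁, k₂ ∈ ℤ} a_{|k₁|} v_{|k₂|}. -/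
/-!
Substituting `m = k - n` writes `(a ∗ v)_k` as `Σ_{m ∈ ℤ} a_{|k-m|} v_{|m|}`. The terms `m = ±j`
(`j ≥ 1`) share the factor `v_j`, and their `a`-coefficients satisfy
`|a_{|k-j|}| + |a_{k+j}| ≤ 2 ν^j Q_k(a)` by definition of `Q_k(a)`, while `|a_k| ≤ Q_k(a)` bounds
the term `m = 0`. Hence `|(a ∗ v)_k| ≤ Q_k(a) ‖v‖_{1,ν} ≤ Q_k(a)`.
-/

/-- The discrete (Chebyshev) convolution `(a ∗ v)_k = Σ_{k₁+k₂=k, k₁,k₂ ∈ ℤ} a_{|k₁|} v_{|k₂|}`. -/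
noncomputable def chebConv (a v : ℕ → ℂ) (k : ℕ) : ℂ :=
  ∑' n : ℤ, a n.natAbs * v ((k : ℤ) - n).natAbs

/-- The quantity `Q_k(a) = max{ |a_k|, sup_{k'≥1} (|a_{|k−k'|}| + |a_{k+k'}|)/(2ν^{k'}) }`. -/
noncomputable def Qbound (ν : ℝ) (a : ℕ → ℂ) (k : ℕ) : ℝ :=
  max (norm (a k))
    (⨆ k' : ℕ, (norm (a ((k : ℤ) - ((k' : ℤ) + 1)).natAbs) +
        norm (a (k + (k' + 1)))) / (2 * ν ^ (k' + 1)))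

theorem norm_tsum_int_le_of_pair_bound {E : Type*} [NormedAddCommGroup E] [CompleteSpace E]
    {f : ℤ → E} {b : ℕ → ℝ} (hb : Summable b)
    (hfb : ∀ n : ℕ, ‖f (n + 1)‖ + ‖f (-(n + 1))‖ ≤ b n) :
    ‖∑' m : ℤ, f m‖ ≤ ‖f 0‖ + ∑' n : ℕ, b n := by
  have hpos : Summable fun n : ℕ => f (n + 1) :=
    .of_norm_bounded hb fun n => (le_add_of_nonneg_right (norm_nonneg _)).trans (hfb n)
  have hneg : Summable fun n : ℕ => f (-(n + 1)) :=
    .of_norm_bounded hb fun n => (le_add_of_nonneg_left (norm_nonneg _)).trans (hfb n)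
  have hsplit : ∑' m : ℤ, f m = f 0 + ∑' n : ℕ, (f (n + 1) + f (-(n + 1))) := by
    rw [tsum_of_add_one_of_neg_add_one hpos hneg, hpos.tsum_add hneg]
    abel
  calc ‖∑' m : ℤ, f m‖ ≤ ‖f 0‖ + ‖∑' n : ℕ, (f (n + 1) + f (-(n + 1)))‖ :=
        hsplit ▸ norm_add_le _ _
    _ ≤ ‖f 0‖ + ∑' n : ℕ, b n := by
        gcongr
        exact tsum_of_norm_bounded hb.hasSum fun n => (norm_add_le _ _).trans (hfb n)

theorem chebConv_eq_tsum_sub (a v : ℕ → ℂ) (k : ℕ) :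
    chebConv a v k = ∑' m : ℤ, a ((k : ℤ) - m).natAbs * v m.natAbs := by
  rw [chebConv, ← (Equiv.subLeft (k : ℤ)).tsum_eq]
  simp [Equiv.subLeft_apply]

/-- The norm `‖a‖_{1,ν}` of `ℓ¹_ν`. -/
noncomputable def weightedNorm (ν : ℝ) (a : ℕ → ℂ) : ℝ :=
  ‖a 0‖ + 2 * ∑' k : ℕ, ‖a (k + 1)‖ * ν ^ (k + 1)

theorem norm_le_weightedNorm {ν : ℝ} (hν : 1 ≤ ν) {a : ℕ → ℂ}
    (ha : Summable fun k : ℕ => ‖a (k + 1)‖ * ν ^ (k + 1)) (j : ℕ) :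
    ‖a j‖ ≤ weightedNorm ν a := by
  have htail : 0 ≤ ∑' k : ℕ, ‖a (k + 1)‖ * ν ^ (k + 1) :=
    tsum_nonneg fun k => mul_nonneg (norm_nonneg _) (by positivity)
  cases j with
  | zero => exact le_add_of_nonneg_right (by positivity)
  | succ m =>
    calc ‖a (m + 1)‖ ≤ ‖a (m + 1)‖ * ν ^ (m + 1) :=
          le_mul_of_one_le_right (norm_nonneg _) (one_le_pow₀ hν)
      _ ≤ ∑' k : ℕ, ‖a (k + 1)‖ * ν ^ (k + 1) :=
          ha.le_tsum m fun k _ => mul_nonneg (norm_nonneg _) (by positivity)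
      _ ≤ weightedNorm ν a := by
          unfold weightedNorm
          linarith [norm_nonneg (a 0)]

theorem norm_le_Qbound (ν : ℝ) (a : ℕ → ℂ) (k : ℕ) : ‖a k‖ ≤ Qbound ν a k :=
  le_max_left _ _

theorem Qbound_nonneg (ν : ℝ) (a : ℕ → ℂ) (k : ℕ) : 0 ≤ Qbound ν a k :=
  (norm_nonneg _).trans (norm_le_Qbound ν a k)

theorem norm_add_norm_le_Qbound {ν : ℝ} (hν : 1 ≤ ν) {a : ℕ → ℂ}
    (ha : Summable fun k : ℕ => ‖a (k + 1)‖ * ν ^ (k + 1)) (k n : ℕ) :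
    ‖a ((k : ℤ) - ((n : ℤ) + 1)).natAbs‖ + ‖a (k + (n + 1))‖ ≤ 2 * ν ^ (n + 1) * Qbound ν a k := by
  have hw : ∀ j, 0 < 2 * ν ^ (j + 1) := fun j => by positivity
  -- without this bound the `⨆` in `Qbound` would be the junk value `0`
  have hbdd : BddAbove (Set.range fun j : ℕ =>
      (‖a ((k : ℤ) - ((j : ℤ) + 1)).natAbs‖ + ‖a (k + (j + 1))‖) / (2 * ν ^ (j + 1))) := by
    refine ⟨weightedNorm ν a, ?_⟩
    rintro _ ⟨j, rfl⟩
    rw [div_le_iff₀ (hw j)]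
    nlinarith [norm_le_weightedNorm hν ha ((k : ℤ) - ((j : ℤ) + 1)).natAbs,
      norm_le_weightedNorm hν ha (k + (j + 1)), one_le_pow₀ (n := j + 1) hν,
      (norm_nonneg (a 0)).trans (norm_le_weightedNorm hν ha 0)]
  rw [mul_comm, ← div_le_iff₀ (hw n)]
  exact (le_ciSup hbdd n).trans (le_max_right _ _)

/-- Uniform bound on the entries of a convolution with a sequence of unit `ℓ¹_ν` norm:
for `‖v‖_{1,ν} ≤ 1` one has `|(a ∗ v)_k| ≤ Q_k(a)` for every `k`. -/
theorem chebConv_entry_bound (ν : ℝ) (hν : 1 ≤ ν) (a v : ℕ → ℂ)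
    (ha : Summable fun k : ℕ => norm (a (k + 1)) * ν ^ (k + 1))
    (hv : Summable fun k : ℕ => norm (v (k + 1)) * ν ^ (k + 1))
    (hvnorm : norm (v 0) + 2 * ∑' k : ℕ, norm (v (k + 1)) * ν ^ (k + 1) ≤ 1) :
    ∀ k : ℕ, norm (chebConv a v k) ≤ Qbound ν a k := by
  intro k
  set Q := Qbound ν a k
  set f : ℤ → ℂ := fun m => a ((k : ℤ) - m).natAbs * v m.natAbs
  have hpair (n : ℕ) : ‖f (n + 1)‖ + ‖f (-(n + 1))‖ ≤ 2 * Q * (‖v (n + 1)‖ * ν ^ (n + 1)) := by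
    have hn : ((n : ℤ) + 1).natAbs = n + 1 := by omega
    have hk : ((k : ℤ) - -((n : ℤ) + 1)).natAbs = k + (n + 1) := by omega
    simp only [f, norm_mul, hn, hk, Int.natAbs_neg]
    nlinarith [norm_add_norm_le_Qbound hν ha k n, norm_nonneg (v (n + 1))]
  calc ‖chebConv a v k‖ ≤ ‖f 0‖ + ∑' n : ℕ, 2 * Q * (‖v (n + 1)‖ * ν ^ (n + 1)) :=
        chebConv_eq_tsum_sub a v k ▸ norm_tsum_int_le_of_pair_bound (hv.mul_left (2 * Q)) hpair
    _ ≤ Q * (‖v 0‖ + 2 * ∑' n : ℕ, ‖v (n + 1)‖ * ν ^ (n + 1)) := by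
        rw [tsum_mul_left]
        simp only [f, sub_zero, Int.natAbs_zero, Int.natAbs_natCast, norm_mul]
        nlinarith [norm_le_Qbound ν a k, norm_nonneg (v 0)]
    _ ≤ Q := mul_le_of_le_one_right (Qbound_nonneg ν a k) hvnorm
end

section
/- Let β ∈ ℝ and let u : ℝ → ℝ be a C⁴ function satisfying u''''(t) + β u''(t) + e^{u(t)} − 1 = 0 for all t ∈ ℝ. Assume that u(t) u'''(t) → 0, u'(t) u''(t) → 0 and u(t) u'(t) → 0 as t → ±∞, and that the functions t ↦ u''(t)², t ↦ u'(t)² and t ↦ (e^{u(t)} − 1) u(t) are integrable over ℝ. Then ∫_ℝ (u''(t)² − β u'(t)²) dt = − ∫_ℝ (e^{u(t)} − 1) u(t) dt. -/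
/-!
Multiply the equation by `u` and integrate. Since
`u u'''' + β u u'' = (u u''' - u' u'' + β u u')' + u''² - β u'²`,
the equation turns `(eᵘ - 1) u + u''² - β u'²` into minus the derivative of the flux
`u u''' - u' u'' + β u u'`, which vanishes at `±∞`; so its integral over `ℝ` is zero.
-/

open MeasureTheory Filter

theorem ContDiff.hasDerivAt_iteratedDeriv {𝕜 F : Type*} [NontriviallyNormedField 𝕜]
    [NormedAddCommGroup F] [NormedSpace 𝕜 F] {n k : ℕ} {f : 𝕜 → F} (hf : ContDiff 𝕜 n f)
    (hk : k < n) (x : 𝕜) :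
    HasDerivAt (iteratedDeriv k f) (iteratedDeriv (k + 1) f x) x := by
  rw [iteratedDeriv_succ]
  exact (hf.differentiable_iteratedDeriv k (by exact_mod_cast hk) x).hasDerivAt

noncomputable def suspensionBridgeFlux (β : ℝ) (u : ℝ → ℝ) (t : ℝ) : ℝ :=
  u t * iteratedDeriv 3 u t - deriv u t * iteratedDeriv 2 u t + β * (u t * deriv u t)

theorem hasDerivAt_suspensionBridgeFlux (β : ℝ) {u : ℝ → ℝ} (hu : ContDiff ℝ 4 u) (t : ℝ) :
    HasDerivAt (suspensionBridgeFlux β u)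
      (u t * (iteratedDeriv 4 u t + β * iteratedDeriv 2 u t)
        - (iteratedDeriv 2 u t ^ 2 - β * deriv u t ^ 2)) t := by
  have hd : ∀ k < 4, ∀ s, HasDerivAt (iteratedDeriv k u) (iteratedDeriv (k + 1) u s) s :=
    fun k hk => hu.hasDerivAt_iteratedDeriv (by exact_mod_cast hk)
  have h0 := hd 0 (by norm_num) t
  have h1 := hd 1 (by norm_num) t
  simp only [iteratedDeriv_zero, iteratedDeriv_one, zero_add] at h0 h1
  have h : HasDerivAt (suspensionBridgeFlux β u) _ t :=
    ((h0.mul (hd 3 (by norm_num) t)).sub (h1.mul (hd 2 (by norm_num) t))).add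
      ((h0.mul h1).const_mul β)
  exact h.congr_deriv (by ring)

theorem tendsto_suspensionBridgeFlux (β : ℝ) {u : ℝ → ℝ} {l : Filter ℝ}
    (h3 : Tendsto (fun t => u t * iteratedDeriv 3 u t) l (nhds 0))
    (h2 : Tendsto (fun t => deriv u t * iteratedDeriv 2 u t) l (nhds 0))
    (h1 : Tendsto (fun t => u t * deriv u t) l (nhds 0)) :
    Tendsto (suspensionBridgeFlux β u) l (nhds 0) := by
  have h := (h3.sub h2).add (h1.const_mul β)
  rwa [sub_self, mul_zero, add_zero] at h

/-- Integral identity for solutions of the suspension bridge equation decaying at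
infinity: `∫_ℝ (u''² − β u'²) = − ∫_ℝ (eᵘ − 1) u`. -/
theorem suspension_bridge_integral_identity (β : ℝ) (u : ℝ → ℝ)
    (hu : ContDiff ℝ 4 u)
    (hode : ∀ t : ℝ, iteratedDeriv 4 u t + β * iteratedDeriv 2 u t + Real.exp (u t) - 1 = 0)
    (h3top : Tendsto (fun t => u t * iteratedDeriv 3 u t) atTop (nhds 0))
    (h3bot : Tendsto (fun t => u t * iteratedDeriv 3 u t) atBot (nhds 0))
    (h2top : Tendsto (fun t => deriv u t * iteratedDeriv 2 u t) atTop (nhds 0))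
    (h2bot : Tendsto (fun t => deriv u t * iteratedDeriv 2 u t) atBot (nhds 0))
    (h1top : Tendsto (fun t => u t * deriv u t) atTop (nhds 0))
    (h1bot : Tendsto (fun t => u t * deriv u t) atBot (nhds 0))
    (hi2 : Integrable (fun t => (iteratedDeriv 2 u t) ^ 2))
    (hi1 : Integrable (fun t => (deriv u t) ^ 2))
    (hi0 : Integrable (fun t => (Real.exp (u t) - 1) * u t)) :
    (∫ t : ℝ, ((iteratedDeriv 2 u t) ^ 2 - β * (deriv u t) ^ 2)) =
      -∫ t : ℝ, (Real.exp (u t) - 1) * u t := by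
  have hderiv : ∀ t, HasDerivAt (suspensionBridgeFlux β u)
      (-((Real.exp (u t) - 1) * u t) - (iteratedDeriv 2 u t ^ 2 - β * deriv u t ^ 2)) t := by
    intro t
    convert hasDerivAt_suspensionBridgeFlux β hu t using 2
    rw [show iteratedDeriv 4 u t + β * iteratedDeriv 2 u t = -(Real.exp (u t) - 1) by
      linarith [hode t]]
    ring
  have hi0' : Integrable (fun t => -((Real.exp (u t) - 1) * u t)) := hi0.neg
  have hi21 : Integrable (fun t => iteratedDeriv 2 u t ^ 2 - β * deriv u t ^ 2) :=
    hi2.sub (hi1.const_mul β)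
  have hzero := integral_of_hasDerivAt_of_tendsto hderiv (hi0'.sub hi21)
    (tendsto_suspensionBridgeFlux β h3bot h2bot h1bot)
    (tendsto_suspensionBridgeFlux β h3top h2top h1top)
  rw [integral_sub hi0' hi21, integral_neg] at hzero
  linarith
end
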